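/- Let Γ ⊂ ℝ³ be a compact set, let σ be the two-dimensional Hausdorff measure restricted to Γ, assumed finite, let κ ∈ ℂ, and let g : Γ → ℂ be bounded and σ-measurable. Then the single-layer potential φ(x) := ∫_Γ Φ(x,y;κ) g(y) dσ(y) is smooth on ℝ³ ∖ Γ and satisfies the Helmholtz equation Δφ + κ²φ = 0 on ℝ³ ∖ Γ. -/

import Mathlib

noncomputable section
open Real MeasureTheory
open scoped BigOperators Topology

abbrev V3 : Type := EuclideanSpace ℝ (Fin 3)

noncomputable def pd (i : Fin 3) (f : V3 → ℂ) : V3 → ℂ :=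
  fun x => fderiv ℝ f x (EuclideanSpace.single i (1:ℝ))

noncomputable def pdR (i : Fin 3) (f : V3 → ℝ) : V3 → ℝ :=
  fun x => fderiv ℝ f x (EuclideanSpace.single i (1:ℝ))

noncomputable def lap (f : V3 → ℂ) : V3 → ℂ :=
  fun x => ∑ i, pd i (pd i f) x

noncomputable def div3 (u : V3 → Fin 3 → ℂ) : V3 → ℂ :=
  fun x => ∑ i, pd i (fun y => u y i) x

noncomputable def grad3 (f : V3 → ℂ) : V3 → Fin 3 → ℂ :=
  fun x i => pd i f x

noncomputable def vlap (u : V3 → Fin 3 → ℂ) : V3 → Fin 3 → ℂ :=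
  fun x j => lap (fun y => u y j) x

noncomputable def curl3 (u : V3 → Fin 3 → ℂ) : V3 → Fin 3 → ℂ :=
  fun x => ![pd 1 (fun y => u y 2) x - pd 2 (fun y => u y 1) x,
             pd 2 (fun y => u y 0) x - pd 0 (fun y => u y 2) x,
             pd 0 (fun y => u y 1) x - pd 1 (fun y => u y 0) x]

def crossC (a b : Fin 3 → ℂ) : Fin 3 → ℂ :=
  ![a 1 * b 2 - a 2 * b 1, a 2 * b 0 - a 0 * b 2, a 0 * b 1 - a 1 * b 0]

def crossR (a b : Fin 3 → ℝ) : Fin 3 → ℝ :=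
  ![a 1 * b 2 - a 2 * b 1, a 2 * b 0 - a 0 * b 2, a 0 * b 1 - a 1 * b 0]

def dotR (a b : Fin 3 → ℝ) : ℝ := ∑ i, a i * b i
def dotC (a b : Fin 3 → ℂ) : ℂ := ∑ i, a i * b i
def castC (a : Fin 3 → ℝ) : Fin 3 → ℂ := fun i => (a i : ℂ)

/-- The Navier equation `μ Δu + (λ+μ) ∇(∇·u) + ω² u = 0` on a set `U`. -/
def NavierOn (μ lam ω : ℝ) (u : V3 → Fin 3 → ℂ) (U : Set V3) : Prop :=
  ∀ x ∈ U, ∀ j, (μ:ℂ) * vlap u x j + ((lam + μ : ℝ):ℂ) * grad3 (div3 u) x j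
      + ((ω^2 : ℝ):ℂ) * u x j = 0

/-- fundamental solution of the 3D Helmholtz equation -/
noncomputable def Phi (κ : ℂ) (x y : V3) : ℂ :=
  Complex.exp (Complex.I * κ * (‖x - y‖ : ℝ)) / (4 * (π:ℂ) * (‖x - y‖ : ℝ))

noncomputable def gradPhi (κ : ℂ) (x y : V3) : Fin 3 → ℂ :=
  fun i => pd i (fun z => Phi κ z y) x

open Metric Set Filter
open scoped ContDiff

/-!
Off `Γ` the kernel `(x, y) ↦ Φ(x, y; κ)` is smooth, and all its `x`-derivatives are bounded on
`B × Γ` for any closed ball `B` disjoint from the compact set `Γ`; since `g` is integrable for the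
finite measure `σ`, dominated convergence lets us differentiate under the integral sign as often
as we like. In particular `Δφ + κ²φ = ∫ (ΔₓΦ + κ²Φ) g dσ`, and the integrand vanishes because
`Φ(·, y; κ) = h(‖· - y‖)` with `h(r) = e^{iκr}/(4πr)`, and the radial Laplacian `h'' + 2h'/r`
equals `(r h)''/r = -κ² h`.
-/

theorem MeasureTheory.Integrable.smul_of_continuousOn_isCompact {Y 𝕜 E : Type*}
    [TopologicalSpace Y] [T2Space Y] [MeasurableSpace Y] [OpensMeasurableSpace Y]
    [NormedField 𝕜] [NormedAddCommGroup E] [NormedSpace 𝕜 E]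
    {σ : Measure Y} {K : Set Y} {g : Y → 𝕜} {k : Y → E}
    (hg : Integrable g σ) (hK : IsCompact K) (hσK : ∀ᵐ y ∂σ, y ∈ K) (hk : ContinuousOn k K) :
    Integrable (fun y => g y • k y) σ := by
  obtain ⟨M, hM⟩ := hK.exists_bound_of_continuousOn hk
  have hmeas : AEStronglyMeasurable k σ := by
    rw [← Measure.restrict_eq_self_of_ae_mem hσK]
    exact hk.aestronglyMeasurable_of_isCompact hK hK.measurableSet
  exact hg.smul_bdd M hmeas (hσK.mono hM)

theorem integrable_smul_slice {X Y 𝕜 E : Type*} [TopologicalSpace X] [TopologicalSpace Y]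
    [T2Space Y] [MeasurableSpace Y] [OpensMeasurableSpace Y]
    [NormedField 𝕜] [NormedAddCommGroup E] [NormedSpace 𝕜 E]
    {σ : Measure Y} {K : Set Y} {g : Y → 𝕜} {S : Set X} {U : Set (X × Y)} {G : X × Y → E}
    (hG : ContinuousOn G U) (hSK : S ×ˢ K ⊆ U) (hK : IsCompact K)
    (hσK : ∀ᵐ y ∂σ, y ∈ K) (hg : Integrable g σ) {x : X} (hx : x ∈ S) :
    Integrable (fun y => g y • G (x, y)) σ :=
  hg.smul_of_continuousOn_isCompact hK hσK <|
    hG.comp (Continuous.prodMk_right x).continuousOn fun _ hy => hSK ⟨hx, hy⟩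

section ParametricIntegral

variable {X Y E : Type*} [NormedAddCommGroup X] [NormedSpace ℝ X]
  [NormedAddCommGroup Y] [NormedSpace ℝ Y] [NormedAddCommGroup E] [NormedSpace ℂ E]

noncomputable def partialFDerivFst (G : X × Y → E) (p : X × Y) : X →L[ℝ] E :=
  fderiv ℝ G p ∘L ContinuousLinearMap.inl ℝ X Y

variable {G : X × Y → E} {U : Set (X × Y)}

theorem DifferentiableAt.hasFDerivAt_partialFDerivFst {x : X} {y : Y}
    (hG : DifferentiableAt ℝ G (x, y)) :
    HasFDerivAt (fun x' => G (x', y)) (partialFDerivFst G (x, y)) x :=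
  hG.hasFDerivAt.comp x (hasFDerivAt_prodMk_left x y)

theorem ContDiffOn.partialFDerivFst {n : WithTop ℕ∞} (hU : IsOpen U)
    (hG : ContDiffOn ℝ (n + 1) G U) : ContDiffOn ℝ n (partialFDerivFst G) U :=
  ((ContinuousLinearMap.compL ℝ X (X × Y) E).flip (.inl ℝ X Y)).contDiff.comp_contDiffOn
    (hG.fderiv_of_isOpen hU le_rfl)

theorem contDiffOn_fderiv_slice_apply {n : WithTop ℕ∞} (hU : IsOpen U)
    (hG : ContDiffOn ℝ (n + 1) G U) (v : X) :
    ContDiffOn ℝ n (fun p : X × Y => fderiv ℝ (fun x => G (x, p.2)) p.1 v) U := by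
  refine ((hG.partialFDerivFst hU).clm_apply (contDiffOn_const (c := v))).congr fun p hp => ?_
  rw [((hG.differentiableOn (by simp)).differentiableAt
    (hU.mem_nhds hp)).hasFDerivAt_partialFDerivFst.fderiv]

variable [MeasurableSpace Y] [OpensMeasurableSpace Y] [ProperSpace X]
  {σ : Measure Y} {K : Set Y} {g : Y → ℂ} {S : Set X}

theorem hasFDerivAt_integral_smul (hU : IsOpen U) (hG : ContDiffOn ℝ 1 G U) (hS : IsOpen S)
    (hSK : S ×ˢ K ⊆ U) (hK : IsCompact K) (hσK : ∀ᵐ y ∂σ, y ∈ K) (hg : Integrable g σ)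
    {x₀ : X} (hx₀ : x₀ ∈ S) :
    HasFDerivAt (fun x => ∫ y, g y • G (x, y) ∂σ)
      (∫ y, g y • partialFDerivFst G (x₀, y) ∂σ) x₀ := by
  obtain ⟨δ, hδ, hball⟩ := nhds_basis_closedBall.mem_iff.1 (hS.mem_nhds hx₀)
  have hBK : closedBall x₀ δ ×ˢ K ⊆ U := (prod_mono hball le_rfl).trans hSK
  have hG' : ContinuousOn (partialFDerivFst G) U :=
    (hG.partialFDerivFst (n := 0) hU).continuousOn
  obtain ⟨M, hM⟩ :=
    ((isCompact_closedBall x₀ δ).prod hK).exists_bound_of_continuousOn (hG'.mono hBK)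
  refine hasFDerivAt_integral_of_dominated_of_fderiv_le
    (F' := fun x y => g y • partialFDerivFst G (x, y)) (bound := fun y => ‖g y‖ * M)
    (ball_mem_nhds x₀ hδ) ?_ (integrable_smul_slice hG.continuousOn hSK hK hσK hg hx₀)
    (integrable_smul_slice hG' hSK hK hσK hg hx₀).aestronglyMeasurable ?_
    (hg.norm.mul_const M) ?_
  · filter_upwards [hS.mem_nhds hx₀] with x hx
    exact (integrable_smul_slice hG.continuousOn hSK hK hσK hg hx).aestronglyMeasurable
  · filter_upwards [hσK] with y hy x hx
    rw [norm_smul]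
    exact mul_le_mul_of_nonneg_left (hM _ ⟨ball_subset_closedBall hx, hy⟩) (norm_nonneg _)
  · filter_upwards [hσK] with y hy x hx
    have hxy : (x, y) ∈ U := hBK ⟨ball_subset_closedBall hx, hy⟩
    exact ((hG.differentiableOn one_ne_zero).differentiableAt
      (hU.mem_nhds hxy)).hasFDerivAt_partialFDerivFst.const_smul (g y)

theorem fderiv_integral_smul_apply [CompleteSpace E] (hU : IsOpen U) (hG : ContDiffOn ℝ 1 G U)
    (hS : IsOpen S) (hSK : S ×ˢ K ⊆ U) (hK : IsCompact K) (hσK : ∀ᵐ y ∂σ, y ∈ K)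
    (hg : Integrable g σ) {x : X} (hx : x ∈ S) (v : X) :
    fderiv ℝ (fun x => ∫ y, g y • G (x, y) ∂σ) x v =
      ∫ y, g y • fderiv ℝ (fun x' => G (x', y)) x v ∂σ := by
  have hG' : ContinuousOn (partialFDerivFst G) U :=
    (hG.partialFDerivFst (n := 0) hU).continuousOn
  rw [(hasFDerivAt_integral_smul hU hG hS hSK hK hσK hg hx).fderiv,
    ContinuousLinearMap.integral_apply (integrable_smul_slice hG' hSK hK hσK hg hx)]
  refine integral_congr_ae (hσK.mono fun y hy => ?_)
  have hxy : (x, y) ∈ U := hSK ⟨hx, hy⟩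
  dsimp only
  rw [((hG.differentiableOn one_ne_zero).differentiableAt
    (hU.mem_nhds hxy)).hasFDerivAt_partialFDerivFst.fderiv]
  rfl

end ParametricIntegral

universe u

-- `X` and `E` share a universe because the induction replaces `E` by `X →L[ℝ] E`.
theorem contDiffOn_integral_smul {X E : Type u} {Y : Type*} [NormedAddCommGroup X]
    [NormedSpace ℝ X] [ProperSpace X] [NormedAddCommGroup Y] [NormedSpace ℝ Y]
    [MeasurableSpace Y] [OpensMeasurableSpace Y] [NormedAddCommGroup E] [NormedSpace ℂ E]
    {σ : Measure Y} {K : Set Y} {g : Y → ℂ} {S : Set X} {U : Set (X × Y)}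
    {G : X × Y → E} (hU : IsOpen U) (hG : ContDiffOn ℝ ∞ G U) (hS : IsOpen S)
    (hSK : S ×ˢ K ⊆ U) (hK : IsCompact K) (hσK : ∀ᵐ y ∂σ, y ∈ K) (hg : Integrable g σ) :
    ContDiffOn ℝ ∞ (fun x => ∫ y, g y • G (x, y) ∂σ) S := by
  rw [contDiffOn_infty]
  intro n
  induction n generalizing E with
  | zero =>
    exact contDiffOn_zero.2 fun x hx => (hasFDerivAt_integral_smul hU (hG.of_le (by simp)) hS
      hSK hK hσK hg hx).continuousAt.continuousWithinAt
  | succ n ih =>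
    have hD := fun x (hx : x ∈ S) =>
      hasFDerivAt_integral_smul hU (hG.of_le (by simp)) hS hSK hK hσK hg hx
    rw [Nat.cast_succ, contDiffOn_succ_iff_fderiv_of_isOpen hS]
    refine ⟨fun x hx => (hD x hx).differentiableAt.differentiableWithinAt, by simp, ?_⟩
    exact (ih (hG.partialFDerivFst hU)).congr fun x hx => (hD x hx).fderiv

theorem lap_integral_smul {Y : Type*} [NormedAddCommGroup Y] [NormedSpace ℝ Y]
    [MeasurableSpace Y] [OpensMeasurableSpace Y] {σ : Measure Y} {K : Set Y} {g : Y → ℂ}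
    {S : Set V3} {U : Set (V3 × Y)} {G : V3 × Y → ℂ} (hU : IsOpen U) (hG : ContDiffOn ℝ 2 G U)
    (hS : IsOpen S) (hSK : S ×ˢ K ⊆ U) (hK : IsCompact K) (hσK : ∀ᵐ y ∂σ, y ∈ K)
    (hg : Integrable g σ) {x : V3} (hx : x ∈ S) :
    lap (fun x => ∫ y, g y • G (x, y) ∂σ) x = ∫ y, g y • lap (fun x' => G (x', y)) x ∂σ := by
  have hGi : ∀ i, ContDiffOn ℝ 1 (fun p : V3 × Y => pd i (fun x => G (x, p.2)) p.1) U :=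
    fun i => contDiffOn_fderiv_slice_apply hU hG _
  have hpd : ∀ i, pd i (fun x => ∫ y, g y • G (x, y) ∂σ) =ᶠ[𝓝 x]
      fun x => ∫ y, g y • pd i (fun x' => G (x', y)) x ∂σ := fun i =>
    eventually_of_mem (hS.mem_nhds hx) fun x hx =>
      fderiv_integral_smul_apply hU (hG.of_le (by simp)) hS hSK hK hσK hg hx _
  have hpdpd : ∀ i, pd i (pd i fun x => ∫ y, g y • G (x, y) ∂σ) x =
      ∫ y, g y • pd i (pd i fun x' => G (x', y)) x ∂σ := fun i => by
    rw [pd, (hpd i).fderiv_eq]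
    exact fderiv_integral_smul_apply hU (hGi i) hS hSK hK hσK hg hx _
  simp only [lap, hpdpd, Finset.smul_sum]
  exact (integral_finsetSum _ fun i _ => integrable_smul_slice
    (contDiffOn_fderiv_slice_apply (n := 0) hU (hGi i) _).continuousOn hSK hK hσK hg hx).symm

theorem hasFDerivAt_norm_sub {E : Type*} [NormedAddCommGroup E] [InnerProductSpace ℝ E]
    {x c : E} (hx : x ≠ c) :
    HasFDerivAt (fun z => ‖z - c‖) (‖x - c‖⁻¹ • innerSL ℝ (x - c)) x := by
  have hr : 0 < ‖x - c‖ := norm_pos_iff.2 (sub_ne_zero.2 hx)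
  have h := ((hasStrictFDerivAt_norm_sq (x - c)).hasFDerivAt.comp x
    ((hasFDerivAt_id x).sub_const c)).sqrt (by simp [hr.ne'])
  convert h using 1
  · simp [Real.sqrt_sq (norm_nonneg _)]
  · ext v
    simp only [map_sub, smul_apply, sub_apply, coe_innerSL_apply, smul_eq_mul, id_eq,
      Function.comp_apply, Real.sqrt_sq hr.le, one_div, mul_inv_rev, ContinuousLinearMap.comp_id,
      nsmul_eq_mul, Nat.cast_ofNat]
    field_simp

section RadialLaplacian

variable {n : ℕ} {F : Type*} [NormedAddCommGroup F] [NormedSpace ℝ F]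
  {h h' h'' : ℝ → F} {c x : EuclideanSpace ℝ (Fin n)}

theorem fderiv_comp_norm_sub_single (hh : ∀ r > 0, HasDerivAt h (h' r) r) (hx : x ≠ c)
    (i : Fin n) :
    fderiv ℝ (fun z => h ‖z - c‖) x (EuclideanSpace.single i 1) =
      ((x - c) i / ‖x - c‖) • h' ‖x - c‖ := by
  have hr : 0 < ‖x - c‖ := norm_pos_iff.2 (sub_ne_zero.2 hx)
  have hd : HasFDerivAt (fun z => h ‖z - c‖) _ x :=
    (hh _ hr).hasFDerivAt.comp x (hasFDerivAt_norm_sub hx)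
  rw [hd.fderiv]
  simp [EuclideanSpace.inner_single_right, div_eq_inv_mul, ← sub_smul, smul_smul]

theorem sum_fderiv_fderiv_comp_norm_sub (hh : ∀ r > 0, HasDerivAt h (h' r) r)
    (hh' : ∀ r > 0, HasDerivAt h' (h'' r) r) (hx : x ≠ c) :
    ∑ i, fderiv ℝ (fun z => fderiv ℝ (fun w => h ‖w - c‖) z (EuclideanSpace.single i 1)) x
        (EuclideanSpace.single i 1) =
      h'' ‖x - c‖ + ((n - 1) / ‖x - c‖) • h' ‖x - c‖ := by
  have hr : 0 < ‖x - c‖ := norm_pos_iff.2 (sub_ne_zero.2 hx)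
  have hterm : ∀ i, fderiv ℝ (fun z => fderiv ℝ (fun w => h ‖w - c‖) z
      (EuclideanSpace.single i 1)) x (EuclideanSpace.single i 1) =
      ((x - c) i / ‖x - c‖) ^ 2 • h'' ‖x - c‖ +
        (‖x - c‖⁻¹ - (x - c) i ^ 2 / ‖x - c‖ ^ 3) • h' ‖x - c‖ := by
    intro i
    have hev : (fun z => fderiv ℝ (fun w => h ‖w - c‖) z (EuclideanSpace.single i 1)) =ᶠ[𝓝 x]
        fun z => ((z - c) i * ‖z - c‖⁻¹) • h' ‖z - c‖ := by
      filter_upwards [isOpen_ne.mem_nhds hx] with z hz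
      rw [fderiv_comp_norm_sub_single hh hz, div_eq_mul_inv]
    have hcoord : HasFDerivAt (fun z : EuclideanSpace ℝ (Fin n) => (z - c) i)
        (EuclideanSpace.proj i : EuclideanSpace ℝ (Fin n) →L[ℝ] ℝ) x := by
      simpa using
        ((EuclideanSpace.proj (𝕜 := ℝ) (ι := Fin n) i).hasFDerivAt (x := x)).sub_const (c i)
    have hinv : HasFDerivAt (fun z => ‖z - c‖⁻¹) _ x :=
      (hasDerivAt_inv hr.ne').comp_hasFDerivAt x (hasFDerivAt_norm_sub hx)
    have hk : HasFDerivAt (fun z => h' ‖z - c‖) _ x :=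
      (hh' _ hr).hasFDerivAt.comp x (hasFDerivAt_norm_sub hx)
    have hd : HasFDerivAt (fun z => ((z - c) i * ‖z - c‖⁻¹) • h' ‖z - c‖) _ x :=
      (hcoord.mul hinv).smul hk
    rw [hev.fderiv_eq, hd.fderiv]
    simp only [PiLp.sub_apply, Pi.mul_apply, map_sub, ContinuousLinearMap.comp_smulₛₗ, map_inv₀,
      ringHom_apply, ContinuousLinearMap.comp_sub, smul_smul, neg_mul, neg_smul, smul_neg,
      add_apply, smul_apply, sub_apply, ContinuousLinearMap.comp_apply, coe_innerSL_apply,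
      EuclideanSpace.inner_single_right, one_mul, ContinuousLinearMap.toSpanSingleton_apply,
      ← sub_smul, ContinuousLinearMap.smulRight_apply, neg_apply, smul_eq_mul, PiLp.proj_apply,
      PiLp.single_eq_same, mul_one]
    congr 2 <;> ring
  rw [Finset.sum_congr rfl fun i _ => hterm i, Finset.sum_add_distrib, ← Finset.sum_smul,
    ← Finset.sum_smul]
  have hsum : ∑ i, (x - c) i ^ 2 = ‖x - c‖ ^ 2 := (EuclideanSpace.real_norm_sq_eq _).symm
  have hcoef₁ : ∑ i, ((x - c) i / ‖x - c‖) ^ 2 = 1 := by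
    simp_rw [div_pow, ← Finset.sum_div, hsum]
    field_simp
  have hcoef₂ : ∑ i, (‖x - c‖⁻¹ - (x - c) i ^ 2 / ‖x - c‖ ^ 3) = (n - 1) / ‖x - c‖ := by
    rw [Finset.sum_sub_distrib, ← Finset.sum_div, hsum]
    simp only [Finset.sum_const, Finset.card_univ, Fintype.card_fin, nsmul_eq_mul]
    field_simp
  rw [hcoef₁, hcoef₂, one_smul]

end RadialLaplacian

noncomputable def helmholtzProfile (κ : ℂ) (r : ℝ) : ℂ :=
  Complex.exp (Complex.I * κ * r) / (4 * π * r)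

noncomputable def helmholtzProfileDeriv (κ : ℂ) (r : ℝ) : ℂ :=
  Complex.exp (Complex.I * κ * r) * (Complex.I * κ * r - 1) / (4 * π * r ^ 2)

theorem Phi_eq_helmholtzProfile (κ : ℂ) (x y : V3) : Phi κ x y = helmholtzProfile κ ‖x - y‖ :=
  rfl

theorem contDiffOn_Phi (κ : ℂ) :
    ContDiffOn ℝ ∞ (fun p : V3 × V3 => Phi κ p.1 p.2) {p | p.1 ≠ p.2} := by
  intro p hp
  have hr : ‖p.1 - p.2‖ ≠ 0 := norm_ne_zero_iff.2 (sub_ne_zero.2 hp)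
  have hprofile : ContDiffAt ℝ ∞ (helmholtzProfile κ) ‖p.1 - p.2‖ := by
    have hofReal : ContDiff ℝ ∞ ((↑) : ℝ → ℂ) := Complex.ofRealCLM.contDiff
    unfold helmholtzProfile
    simp_rw [div_eq_mul_inv]
    exact (by fun_prop : ContDiffAt ℝ ∞ _ _).mul
      ((by fun_prop : ContDiffAt ℝ ∞ _ _).inv (by simp [hr, Real.pi_ne_zero]))
  exact (hprofile.comp p
    ((contDiffAt_fst.sub contDiffAt_snd).norm ℝ (sub_ne_zero.2 hp))).contDiffWithinAt

theorem hasDerivAt_cexp_I_mul_ofReal (κ : ℂ) (r : ℝ) :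
    HasDerivAt (fun r : ℝ => Complex.exp (Complex.I * κ * r))
      (Complex.exp (Complex.I * κ * r) * (Complex.I * κ)) r := by
  simpa using ((hasDerivAt_id (r : ℂ)).const_mul (Complex.I * κ)).cexp.comp_ofReal

theorem hasDerivAt_helmholtzProfile (κ : ℂ) {r : ℝ} (hr : r ≠ 0) :
    HasDerivAt (helmholtzProfile κ) (helmholtzProfileDeriv κ r) r := by
  have hden : HasDerivAt (fun r : ℝ => 4 * π * (r : ℂ)) (4 * π) r := by
    simpa using ((hasDerivAt_id (r : ℂ)).const_mul (4 * π : ℂ)).comp_ofReal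
  refine ((hasDerivAt_cexp_I_mul_ofReal κ r).div hden
    (by simp [hr, Real.pi_ne_zero])).congr_deriv ?_
  rw [helmholtzProfileDeriv]
  field_simp

theorem hasDerivAt_helmholtzProfileDeriv (κ : ℂ) {r : ℝ} (hr : r ≠ 0) :
    HasDerivAt (helmholtzProfileDeriv κ) (Complex.exp (Complex.I * κ * r) *
      (-κ ^ 2 * r ^ 2 - 2 * Complex.I * κ * r + 2) / (4 * π * r ^ 3)) r := by
  have hlin : HasDerivAt (fun r : ℝ => Complex.I * κ * r - 1) (Complex.I * κ) r := by
    simpa using (((hasDerivAt_id (r : ℂ)).const_mul (Complex.I * κ)).sub_const 1).comp_ofReal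
  have hnum : HasDerivAt
      (fun r : ℝ => Complex.exp (Complex.I * κ * r) * (Complex.I * κ * r - 1)) _ r :=
    (hasDerivAt_cexp_I_mul_ofReal κ r).mul hlin
  have hden : HasDerivAt (fun r : ℝ => 4 * π * (r : ℂ) ^ 2) (4 * π * (2 * r : ℂ)) r := by
    simpa using ((hasDerivAt_pow 2 (r : ℂ)).const_mul (4 * π : ℂ)).comp_ofReal
  refine (hnum.div hden (by simp [hr, Real.pi_ne_zero])).congr_deriv ?_
  field_simp
  ring_nf
  simp only [Complex.I_sq]
  ring

theorem lap_Phi_add_sq_mul_eq_zero (κ : ℂ) {x y : V3} (hxy : x ≠ y) :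
    lap (fun z => Phi κ z y) x + κ ^ 2 * Phi κ x y = 0 := by
  have hr : ‖x - y‖ ≠ 0 := norm_ne_zero_iff.2 (sub_ne_zero.2 hxy)
  have hlap := sum_fderiv_fderiv_comp_norm_sub (fun r hr => hasDerivAt_helmholtzProfile κ hr.ne')
    (fun r hr => hasDerivAt_helmholtzProfileDeriv κ hr.ne') hxy
  rw [show lap (fun z => Phi κ z y) x = _ from hlap, Phi_eq_helmholtzProfile, helmholtzProfile,
    helmholtzProfileDeriv, Complex.real_smul]
  push_cast
  field_simp
  ring

/-- the single-layer potential is smooth off `Γ` and satisfies the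
Helmholtz equation there. -/
theorem single_layer_potential_helmholtz
    (Γ : Set V3) (hΓ : IsCompact Γ)
    (σ : Measure V3) (hσ : σ = (μH[2] : Measure V3).restrict Γ)
    (hfin : σ Set.univ < ⊤)
    (κ : ℂ) (g : V3 → ℂ) (hmeas : Measurable g)
    (C : ℝ) (hbd : ∀ y ∈ Γ, ‖g y‖ ≤ C)
    (φ : V3 → ℂ) (hφ : ∀ x, φ x = ∫ y, Phi κ x y * g y ∂σ) :
    ContDiffOn ℝ (⊤ : ℕ∞) φ Γᶜ ∧
    (∀ x ∉ Γ, lap φ x + κ^2 * φ x = 0) := by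
  have hσΓ : ∀ᵐ y ∂σ, y ∈ Γ := by
    rw [hσ]
    exact ae_restrict_mem hΓ.measurableSet
  have hg : Integrable g σ :=
    have : IsFiniteMeasure σ := ⟨hfin⟩
    (integrable_const C).mono' hmeas.aestronglyMeasurable (hσΓ.mono hbd)
  have hU : IsOpen {p : V3 × V3 | p.1 ≠ p.2} := isOpen_ne_fun continuous_fst continuous_snd
  have hSK : Γᶜ ×ˢ Γ ⊆ {p : V3 × V3 | p.1 ≠ p.2} := fun p hp h => hp.1 (h ▸ hp.2)
  obtain rfl : φ = fun x => ∫ y, g y • Phi κ x y ∂σ := funext fun x => by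
    simp only [hφ, smul_eq_mul, mul_comm]
  refine ⟨contDiffOn_integral_smul hU (contDiffOn_Phi κ) hΓ.isClosed.isOpen_compl hSK hΓ hσΓ hg,
    fun x hx => ?_⟩
  have hlap : lap (fun x => ∫ y, g y • Phi κ x y ∂σ) x = -κ ^ 2 * ∫ y, g y • Phi κ x y ∂σ := by
    rw [lap_integral_smul hU ((contDiffOn_Phi κ).of_le ENat.LEInfty.out)
      hΓ.isClosed.isOpen_compl hSK hΓ hσΓ hg hx, ← integral_const_mul]
    refine integral_congr_ae (hσΓ.mono fun y hy => ?_)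
    have hxy : x ≠ y := fun h => hx (h ▸ hy)
    simp only [smul_eq_mul]
    linear_combination g y * lap_Phi_add_sq_mul_eq_zero κ hxy
  rw [hlap]
  ring
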